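/- arXiv:2507.05497 — 7 statements merged into one kernel-verified Lean document; each statement's English description precedes it below -/
import Mathlib

section
/- Let (U,S) be a strong right action pair in a monoid M, and let u ∈ U and s ∈ S¹ be such that us = s and su = u. Then θ_u is the least left congruence on S¹ containing the pair (1,s), i.e. θ_u = (1,s)^lc. -/
namespace PaperFDP

/-- `σ` is a left congruence on the subset `T` of the monoid `M` (with `T`
thought of as a subsemigroup): an equivalence relation on `T`, compatible with
left multiplication by elements of `T`. -/
def IsLeftCongOn {M : Type*} [Monoid M] (T : Set M) (σ : M → M → Prop) : Prop :=
  (∀ a b : M, σ a b → a ∈ T ∧ b ∈ T) ∧ (∀ a ∈ T, σ a a) ∧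
    (∀ a b : M, σ a b → σ b a) ∧ (∀ a b c : M, σ a b → σ b c → σ a c) ∧
    (∀ c ∈ T, ∀ a b : M, σ a b → σ (c * a) (c * b))

/-- The least left congruence on `T` containing the set of pairs `P`
(the intersection of all left congruences on `T` containing `P`). -/
def lcGen {M : Type*} [Monoid M] (T : Set M) (P : Set (M × M)) (a b : M) : Prop :=
  ∀ σ : M → M → Prop, IsLeftCongOn T σ → (∀ p ∈ P, σ p.1 p.2) → σ a b

/-- Lemma `lem:1s`.  Let `(U,S)` be a strong right action pair in a
monoid `M`, and let `u ∈ U` and `s ∈ S¹ = S ∪ {1}` be such that `us = s` and `su = u`.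
Then `θ_u = (1,s)^lc`, i.e. the left congruence `θ_u = {(a,b) ∈ S¹ × S¹ : au = bu}` is
the least left congruence on `S¹` containing the pair `(1,s)`. -/
theorem stmt4 {M : Type*} [Monoid M] (U S : Set M)
    (hU1 : (1 : M) ∈ U) (hUmul : ∀ x ∈ U, ∀ y ∈ U, x * y ∈ U)
    (hSmul : ∀ x ∈ S, ∀ y ∈ S, x * y ∈ S)
    (hA1 : ∀ s ∈ S, ∀ u ∈ U, ∃ v ∈ U, u * s = s * v)
    (hA2 : ∀ u ∈ U, ∀ v ∈ U, ∀ s ∈ S, ∀ t ∈ S, s * u = t * v → u = v)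
    (u : M) (hu : u ∈ U) (s : M) (hs : s ∈ S ∪ {1})
    (hus : u * s = s) (hsu : s * u = u) :
    ∀ a b : M,
      (a ∈ S ∪ {1} ∧ b ∈ S ∪ {1} ∧ a * u = b * u) ↔
        lcGen (S ∪ {1}) {((1 : M), s)} a b := by
  intro a b
  constructor
  · rintro ⟨ha, hb, hab⟩
    intro σ hσ hP
    obtain ⟨hdom, hrefl, hsymm, htrans, hcomp⟩ := hσ
    have h1s : σ 1 s := hP ((1:M), s) rfl
    have has : σ a (a * s) := by
      have := hcomp a ha 1 s h1s
      rwa [mul_one] at this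
    have hbs : σ b (b * s) := by
      have := hcomp b hb 1 s h1s
      rwa [mul_one] at this
    have key : a * s = b * s := by
      calc a * s = a * (u * s) := by rw [hus]
        _ = (a * u) * s := by rw [mul_assoc]
        _ = (b * u) * s := by rw [hab]
        _ = b * (u * s) := by rw [mul_assoc]
        _ = b * s := by rw [hus]
    exact htrans a (b * s) b (key ▸ has) (hsymm b (b * s) hbs)
  · intro h
    refine h (fun x y => x ∈ S ∪ {1} ∧ y ∈ S ∪ {1} ∧ x * u = y * u) ?_ ?_
    · refine ⟨fun x y h => ⟨h.1, h.2.1⟩, fun x hx => ⟨hx, hx, rfl⟩,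
        fun x y ⟨h1, h2, h3⟩ => ⟨h2, h1, h3.symm⟩,
        fun x y z ⟨h1, h2, h3⟩ ⟨h4, h5, h6⟩ => ⟨h1, h5, h3.trans h6⟩,
        fun c hc x y ⟨h1, h2, h3⟩ => ⟨?_, ?_, by rw [mul_assoc, mul_assoc, h3]⟩⟩
      all_goals
        rcases hc with hc | hc
        case inl =>
          first
          | (rcases h1 with hx | hx
             · exact Or.inl (hSmul c hc x hx)
             · simp only [Set.mem_singleton_iff] at hx; rw [hx, mul_one]; exact Or.inl hc)
          | (rcases h2 with hx | hx
             · exact Or.inl (hSmul c hc y hx)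
             · simp only [Set.mem_singleton_iff] at hx; rw [hx, mul_one]; exact Or.inl hc)
        case inr =>
          simp only [Set.mem_singleton_iff] at hc
          rw [hc, one_mul]
          first | exact h1 | exact h2
    · rintro ⟨p1, p2⟩ hp
      simp only [Set.mem_singleton_iff, Prod.mk.injEq] at hp
      obtain ⟨e1, e2⟩ := hp
      subst e1; subst e2
      exact ⟨Or.inr rfl, hs, by rw [one_mul, hsu]⟩


end PaperFDP
end

section
/- Let (U,S) be a strong right action pair in a monoid M, and let u ∈ U. Suppose there exist an element s ∈ S¹, a subset W ⊆ U, and elements s_v ∈ S¹ for each v ∈ W, such that: (1) θ_u = (1,s)^lc; (2) u ≤_R v in U (i.e. u ∈ vU) for all v ∈ W; (3) (1,s_v) ∈ θ_v for all v ∈ W; and (4) s belongs to the submonoid of S¹ generated by {s_v : v ∈ W}. Then θ_u = ⋁_{v∈W} θ_v, the join of the left congruences θ_v (v ∈ W), which coincides with their join as equivalence relations on S¹. -/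
/-!
`θ_u` contains every `θ_v` (`v ∈ W`) because `u ∈ vU`, hence it contains their join.
Conversely, the class of `1` under a left congruence is a submonoid; the join contains each
`(1, s_v)`, hence `(1, s)`, hence `(1, s)^lc = θ_u`.
-/

namespace PaperFDP

section LeftCongruence

variable {M : Type*} [Monoid M] {T : Set M}

theorem lcGen_isLeftCongOn {P : Set (M × M)} (hTmul : ∀ x ∈ T, ∀ y ∈ T, x * y ∈ T)
    (hP : ∀ p ∈ P, p.1 ∈ T ∧ p.2 ∈ T) : IsLeftCongOn T (lcGen T P) := by
  have hfull : IsLeftCongOn T (fun a b => a ∈ T ∧ b ∈ T) :=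
    ⟨fun _ _ h => h, fun _ ha => ⟨ha, ha⟩, fun _ _ h => ⟨h.2, h.1⟩,
      fun _ _ _ h h' => ⟨h.1, h'.2⟩, fun c hc a b h => ⟨hTmul c hc a h.1, hTmul c hc b h.2⟩⟩
  exact ⟨fun a b h => h _ hfull hP,
    fun a ha σ hσ _ => hσ.2.1 a ha,
    fun a b h σ hσ hσP => hσ.2.2.1 a b (h σ hσ hσP),
    fun a b c h h' σ hσ hσP => hσ.2.2.2.1 a b c (h σ hσ hσP) (h' σ hσ hσP),
    fun c hc a b h σ hσ hσP => hσ.2.2.2.2 c hc a b (h σ hσ hσP)⟩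

/-- The class of `1`: from `1 ~ x` and `1 ~ y` we get `x = x * 1 ~ x * y`. -/
def IsLeftCongOn.oneClass {σ : M → M → Prop} (hσ : IsLeftCongOn T σ) (hT1 : (1 : M) ∈ T) :
    Submonoid M where
  carrier := {x | σ 1 x}
  one_mem' := hσ.2.1 1 hT1
  mul_mem' {x y} hx hy := by
    have hxy : σ x (x * y) := by
      simpa only [mul_one] using hσ.2.2.2.2 x (hσ.1 1 x hx).2 1 y hy
    exact hσ.2.2.2.1 _ _ _ hx hxy

/-- The left congruence `θ_u = {(a, b) ∈ T × T | a u = b u}`. -/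
def rightMulKer (T : Set M) (u : M) (a b : M) : Prop :=
  a ∈ T ∧ b ∈ T ∧ a * u = b * u

theorem rightMulKer_isLeftCongOn (hTmul : ∀ x ∈ T, ∀ y ∈ T, x * y ∈ T) (u : M) :
    IsLeftCongOn T (rightMulKer T u) :=
  ⟨fun _ _ h => ⟨h.1, h.2.1⟩, fun _ ha => ⟨ha, ha, rfl⟩,
    fun _ _ h => ⟨h.2.1, h.1, h.2.2.symm⟩,
    fun _ _ _ h h' => ⟨h.1, h'.2.1, h.2.2.trans h'.2.2⟩,
    fun c hc a b h => ⟨hTmul c hc a h.1, hTmul c hc b h.2.1, by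
      rw [mul_assoc, mul_assoc, h.2.2]⟩⟩

end LeftCongruence

theorem union_one_mul_mem {M : Type*} [Monoid M] {S : Set M}
    (hSmul : ∀ x ∈ S, ∀ y ∈ S, x * y ∈ S) :
    ∀ x ∈ S ∪ {1}, ∀ y ∈ S ∪ {1}, x * y ∈ S ∪ {1} := by
  rintro x (hx | rfl) y (hy | rfl)
  · exact Or.inl (hSmul x hx y hy)
  · rw [mul_one]; exact Or.inl hx
  · rw [one_mul]; exact Or.inl hy
  · rw [one_mul]; exact Or.inr rfl

theorem stmt5_general {M : Type*} [Monoid M] (U S : Set M)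
    (hSmul : ∀ x ∈ S, ∀ y ∈ S, x * y ∈ S)
    (u : M) (s : M)
    (W : Set M) (sv : M → M)
    (h1 : ∀ a b : M,
      (a ∈ S ∪ {1} ∧ b ∈ S ∪ {1} ∧ a * u = b * u) ↔ lcGen (S ∪ {1}) {((1 : M), s)} a b)
    (h2 : ∀ v ∈ W, ∃ w ∈ U, u = v * w)
    (h3 : ∀ v ∈ W, sv v ∈ S ∪ {1} ∧ sv v * v = v)
    (h4 : s ∈ Submonoid.closure (sv '' W)) :
    ∀ a b : M,
      (a ∈ S ∪ {1} ∧ b ∈ S ∪ {1} ∧ a * u = b * u) ↔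
        lcGen (S ∪ {1})
          {p : M × M | p.1 ∈ S ∪ {1} ∧ p.2 ∈ S ∪ {1} ∧ ∃ v ∈ W, p.1 * v = p.2 * v} a b := by
  set T : Set M := S ∪ {1}
  set P : Set (M × M) := {p | p.1 ∈ T ∧ p.2 ∈ T ∧ ∃ v ∈ W, p.1 * v = p.2 * v}
  have hTmul : ∀ x ∈ T, ∀ y ∈ T, x * y ∈ T := union_one_mul_mem hSmul
  have hjoin : IsLeftCongOn T (lcGen T P) := lcGen_isLeftCongOn hTmul fun p hp => ⟨hp.1, hp.2.1⟩
  have hgens : sv '' W ⊆ hjoin.oneClass (Or.inr rfl) := by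
    rintro _ ⟨v, hv, rfl⟩ σ _ hσP
    exact hσP (1, sv v) ⟨Or.inr rfl, (h3 v hv).1, v, hv, by rw [one_mul, (h3 v hv).2]⟩
  have hs : lcGen T P 1 s := Submonoid.closure_le.2 hgens h4
  intro a b
  refine ⟨fun hab => (h1 a b).1 hab _ hjoin (by rintro p rfl; exact hs), fun hab => ?_⟩
  refine hab (rightMulKer T u) (rightMulKer_isLeftCongOn hTmul u) ?_
  rintro p ⟨hp1, hp2, v, hv, hpv⟩
  obtain ⟨w, -, rfl⟩ := h2 v hv
  exact ⟨hp1, hp2, by rw [← mul_assoc, ← mul_assoc, hpv]⟩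

/-- Lemma `lem:bigvee`.  Let `(U,S)` be a strong right action pair
in a monoid `M` and `u ∈ U`.  Suppose `s ∈ S¹ = S ∪ {1}`, `W ⊆ U`, and `s_v ∈ S¹`
(for `v ∈ W`) satisfy: (1) `θ_u = (1,s)^lc`; (2) `u ≤_R v` in `U` for all `v ∈ W`;
(3) `(1, s_v) ∈ θ_v` for all `v ∈ W`; (4) `s` lies in the submonoid generated by the
`s_v`.  Then `θ_u = ⋁_{v ∈ W} θ_v`, the join of the left congruences `θ_v` on `S¹`,
i.e. the least left congruence on `S¹` containing their union. -/
theorem stmt5 {M : Type*} [Monoid M] (U S : Set M)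
    (hU1 : (1 : M) ∈ U) (hUmul : ∀ x ∈ U, ∀ y ∈ U, x * y ∈ U)
    (hSmul : ∀ x ∈ S, ∀ y ∈ S, x * y ∈ S)
    (hA1 : ∀ s ∈ S, ∀ u ∈ U, ∃ v ∈ U, u * s = s * v)
    (hA2 : ∀ u ∈ U, ∀ v ∈ U, ∀ s ∈ S, ∀ t ∈ S, s * u = t * v → u = v)
    (u : M) (hu : u ∈ U) (s : M) (hs : s ∈ S ∪ {1})
    (W : Set M) (hW : W ⊆ U) (sv : M → M)
    (h1 : ∀ a b : M,
      (a ∈ S ∪ {1} ∧ b ∈ S ∪ {1} ∧ a * u = b * u) ↔ lcGen (S ∪ {1}) {((1 : M), s)} a b)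
    (h2 : ∀ v ∈ W, ∃ w ∈ U, u = v * w)
    (h3 : ∀ v ∈ W, sv v ∈ S ∪ {1} ∧ sv v * v = v)
    (h4 : s ∈ Submonoid.closure (sv '' W)) :
    ∀ a b : M,
      (a ∈ S ∪ {1} ∧ b ∈ S ∪ {1} ∧ a * u = b * u) ↔
        lcGen (S ∪ {1})
          {p : M × M | p.1 ∈ S ∪ {1} ∧ p.2 ∈ S ∪ {1} ∧ ∃ v ∈ W, p.1 * v = p.2 * v} a b :=
  stmt5_general U S hSmul u s W sv h1 h2 h3 h4

end PaperFDP
end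

section
/- Let M be a right restriction Ehresmann monoid, let P = P(M) be its semilattice of projections, and let T = T(M) = {a ∈ M : R(a) = 1}. Then for any subsemigroup S of T, the pair (P,S) is a strong right action pair in M: (A1) Ps ⊆ sP for all s ∈ S, and (A2) for p,q ∈ P and s,t ∈ S, sp = tq implies p = q. Moreover, for p ∈ P and a ∈ S, the unique q ∈ P with pa = aq is q = R(pa). -/
namespace PaperFDP

/-- `(S, ·, D, R)` is an Ehresmann semigroup. -/
structure IsEhresmann (S : Type*) [Semigroup S] (D R : S → S) : Prop where
  D_mul_self : ∀ a : S, D a * a = a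
  D_comm : ∀ a b : S, D a * D b = D b * D a
  D_mul : ∀ a b : S, D (a * b) = D (a * D b)
  D_absorb : ∀ a b : S, D (a * b) = D a * D (a * b)
  R_D : ∀ a : S, R (D a) = D a
  mul_R_self : ∀ a : S, a * R a = a
  R_comm : ∀ a b : S, R a * R b = R b * R a
  R_mul : ∀ a b : S, R (a * b) = R (R a * b)
  R_absorb : ∀ a b : S, R (a * b) = R (a * b) * R b
  D_R : ∀ a : S, D (R a) = R a

/-- Corollary `cor:PS`.  Let `M` be a right restriction Ehresmann
monoid, `P = P(M)` its projections, `T = T(M) = {a : R(a) = 1}`, and let `S` be any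
subsemigroup of `T`.  Then `(P,S)` is a strong right action pair in `M`:
(A1) `Ps ⊆ sP` for all `s ∈ S`; (A2) `sp = tq` implies `p = q` for `p,q ∈ P`,
`s,t ∈ S`.  Moreover, for `p ∈ P` and `a ∈ S`, the unique `q ∈ P` with `pa = aq`
is `q = R(pa)`. -/
theorem stmt10 {M : Type*} [Monoid M] (D R : M → M) (h : IsEhresmann M D R)
    (hRR : ∀ a b : M, R a * b = b * R (a * b))
    (S : Set M) (hSmul : ∀ x ∈ S, ∀ y ∈ S, x * y ∈ S)
    (hST : ∀ a ∈ S, R a = 1) :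
    (∀ s ∈ S, ∀ p : M, (∃ c : M, p = D c) →
        ∃ q : M, (∃ c : M, q = D c) ∧ p * s = s * q) ∧
    (∀ p q : M, (∃ c : M, p = D c) → (∃ c : M, q = D c) →
        ∀ s ∈ S, ∀ t ∈ S, s * p = t * q → p = q) ∧
    (∀ p : M, (∃ c : M, p = D c) → ∀ a ∈ S,
        (∃ c : M, R (p * a) = D c) ∧ p * a = a * R (p * a) ∧
          ∀ q : M, (∃ c : M, q = D c) → p * a = a * q → q = R (p * a)) := by
  refine ⟨?_, ?_, ?_⟩
  · intro s hs p ⟨c, hc⟩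
    refine ⟨R (p * s), ⟨R (p * s), (h.D_R _).symm⟩, ?_⟩
    have hRp : R p = p := by rw [hc, h.R_D]
    calc p * s = R p * s := by rw [hRp]
      _ = s * R (p * s) := hRR p s
  · intro p q ⟨c, hc⟩ ⟨d, hd⟩ s hs t ht heq
    have h1 : R (s * p) = p := by
      rw [h.R_mul, hST s hs, one_mul, hc, h.R_D]
    have h2 : R (t * q) = q := by
      rw [h.R_mul, hST t ht, one_mul, hd, h.R_D]
    rw [← h1, ← h2, heq]
  · intro p ⟨c, hc⟩ a ha
    have hRp : R p = p := by rw [hc, h.R_D]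
    refine ⟨⟨R (p * a), (h.D_R _).symm⟩, ?_, ?_⟩
    · calc p * a = R p * a := by rw [hRp]
        _ = a * R (p * a) := hRR p a
    · intro q ⟨d, hd⟩ heq
      have : R (a * q) = q := by
        rw [h.R_mul, hST a ha, one_mul, hd, h.R_D]
      rw [← this, ← heq]

end PaperFDP
end

section
/- Let n ≥ 2, and equip P_n with the unary operations D(a) = id_{ker(a)} and R(a) = id_{coker(a)}. Then: (1) T(P_n^fd) = {a ∈ P_n^fd : R(a) = 1} equals T_n; (2) I(P_n^fd) = {a ∈ P_n^fd : D(a) ≠ 1} equals Sing(P_n^fd) = P_n^fd ∖ S_n, and is a right ideal of P_n^fd; (3) {a ∈ P_n^fd : D(a) ≠ 1 = R(a)} equals Sing(T_n) = T_n ∖ S_n. Moreover, P_n^fd = T_n E_n and Sing(P_n^fd) = Sing(T_n) E_n, i.e. every a ∈ P_n^fd factors as a = bu with b ∈ T_n and u ∈ E_n, and if a ∉ S_n then b can be chosen in Sing(T_n). -/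
open scoped Classical

namespace PaperFDP

/-- Vertex set of a partition diagram: `inl x` is the upper vertex `x`,
`inr x` is the lower vertex `x'`. -/
abbrev V (n : ℕ) := Fin n ⊕ Fin n

/-- A partition in `P_n`: a set partition of the `2n` points, encoded as an
equivalence relation (a `Setoid`). -/
abbrev Ptn (n : ℕ) := Setoid (V n)

/-- Three-row vertex set (upper ⊕ (middle ⊕ lower)) used for the product graph. -/
abbrev W3 (n : ℕ) := Fin n ⊕ (Fin n ⊕ Fin n)

/-- Embedding of `a`'s vertices: upper row stays, lower row goes to the middle row. -/
def upMid {n : ℕ} : V n → W3 n :=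
  Sum.elim Sum.inl fun x => Sum.inr (Sum.inl x)

/-- Embedding of `b`'s vertices: upper row goes to the middle row, lower row stays. -/
def midLow {n : ℕ} : V n → W3 n :=
  Sum.elim (fun x => Sum.inr (Sum.inl x)) fun x => Sum.inr (Sum.inr x)

/-- Embedding of the outer (upper and lower) rows into the three-row vertex set. -/
def outer {n : ℕ} : V n → W3 n :=
  Sum.elim Sum.inl fun x => Sum.inr (Sum.inr x)

/-- The edge relation of the product graph `Π(a,b)`. -/
def joinRel {n : ℕ} (a b : Ptn n) (u v : W3 n) : Prop :=
  (∃ p q : V n, a.r p q ∧ upMid p = u ∧ upMid q = v) ∨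
  (∃ p q : V n, b.r p q ∧ midLow p = u ∧ midLow q = v)

/-- The product of two partitions: `x,y` lie in the same block of `a*b` iff they are
connected in the product graph. -/
def pmul {n : ℕ} (a b : Ptn n) : Ptn n :=
  Setoid.comap outer (Relation.EqvGen.setoid (joinRel a b))

/-- The identity partition, with blocks `{x, x'}`. -/
def onePtn (n : ℕ) : Ptn n := Setoid.ker (Sum.elim id id)

/-- The partition of a transformation `f` (written on the right): `x` is joined to `(x f)'`. -/
def toPtn {n : ℕ} (f : Fin n → Fin n) : Ptn n := Setoid.ker (Sum.elim f id)

/-- `id_ε`, the partition with blocks `A ∪ A'` for the `ε`-classes `A`. -/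
def idOf {n : ℕ} (ε : Setoid (Fin n)) : Ptn n := Setoid.comap (Sum.elim id id) ε

/-- The kernel of a partition. -/
def kerP {n : ℕ} (a : Ptn n) : Setoid (Fin n) := Setoid.comap Sum.inl a

/-- The cokernel of a partition. -/
def cokerP {n : ℕ} (a : Ptn n) : Setoid (Fin n) := Setoid.comap Sum.inr a

/-- `a` has full domain: every upper point is in a block meeting the lower row. -/
def FullDom {n : ℕ} (a : Ptn n) : Prop :=
  ∀ x : Fin n, ∃ y : Fin n, a.r (Sum.inl x) (Sum.inr y)

/-- The full-domain partition monoid `P_n^fd` as a subset of `P_n`. -/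
def Pfd (n : ℕ) : Set (Ptn n) := {a | FullDom a}

/-- `a` is (the partition of) a permutation, i.e. a unit of `P_n`. -/
def IsPermPtn {n : ℕ} (a : Ptn n) : Prop := ∃ g : Equiv.Perm (Fin n), a = toPtn ⇑g

/-- The singular ideal `Sing(P_n^fd) = P_n^fd ∖ S_n`. -/
def SingPfd (n : ℕ) : Set (Ptn n) := {a | FullDom a ∧ ¬ IsPermPtn a}

/-- The boundary linear order on the `2n` vertices: `1 < … < n < n' < … < 1'`. -/
def ordV {n : ℕ} : V n → ℕ :=
  Sum.elim (fun x => (x : ℕ)) fun x => 2 * n - 1 - (x : ℕ)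

/-- `a` is planar: it can be drawn without crossings, equivalently it is
non-crossing with respect to the boundary order on the `2n` vertices. -/
def Planar {n : ℕ} (a : Ptn n) : Prop :=
  ∀ p q r s : V n, ordV p < ordV q → ordV q < ordV r → ordV r < ordV s →
    a.r p r → a.r q s → a.r p q

/-- The planar full-domain partition monoid `PP_n^fd` as a subset of `P_n`. -/
def PPfd (n : ℕ) : Set (Ptn n) := {a | FullDom a ∧ Planar a}

/-- `η_ij`: the equivalence on `{1,…,n}` whose only nontrivial class is `{i,j}`. -/
def etaOf {n : ℕ} (i j : Fin n) : Setoid (Fin n) :=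
  Setoid.ker fun x => if x = j then i else x

/-- `ē_ij = id_{η_ij}`: the partition with block `{i,j,i',j'}` and blocks `{x,x'}` otherwise. -/
def ebar {n : ℕ} (i j : Fin n) : Ptn n := idOf (etaOf i j)

/-- `t̄_ij`: the transformation sending `j ↦ i` and fixing everything else, as a partition. -/
def tbar {n : ℕ} (i j : Fin n) : Ptn n := toPtn fun x => if x = j then i else x

/-- Evaluation of a word as a genuine (semi)group product of partitions
(the empty word evaluates to the identity partition). -/
def evalWith {A : Type*} {n : ℕ} (g : A → Ptn n) : List A → Ptn n
  | [] => onePtn n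
  | [x] => g x
  | x :: y :: w => pmul (g x) (evalWith g (y :: w))

/-- One-step rewriting using a relation from `R`, in an arbitrary context. -/
def OneStep {A : Type*} (R : List A → List A → Prop) (w w' : List A) : Prop :=
  ∃ u v p q : List A, R p q ∧ w = u ++ p ++ v ∧ w' = u ++ q ++ v

/-- The congruence on the free monoid (or free semigroup) generated by `R`. -/
def PresCong {A : Type*} (R : List A → List A → Prop) : List A → List A → Prop :=
  Relation.EqvGen (OneStep R)

end PaperFDP

namespace PaperFDP

/-- The full transformation monoid `T_n`, embedded in `P_n^fd`. -/
def TSet (n : ℕ) : Set (Ptn n) := {a | ∃ f : Fin n → Fin n, a = toPtn f}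

/-- `Sing(T_n) = T_n ∖ S_n`, embedded in `P_n^fd`. -/
def SingTSet (n : ℕ) : Set (Ptn n) :=
  {a | ∃ f : Fin n → Fin n, a = toPtn f ∧ ¬ Function.Bijective f}


section Helpers

variable {n : ℕ}

lemma trivCoker_iff (a : Ptn n) :
    idOf (cokerP a) = onePtn n ↔ ∀ y z : Fin n, a.r (Sum.inr y) (Sum.inr z) ↔ y = z := by
  constructor
  · intro h y z
    have h2 : (idOf (cokerP a)).r (Sum.inl y) (Sum.inl z) ↔
        (onePtn n).r (Sum.inl y) (Sum.inl z) := by rw [h]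
    exact h2
  · intro h
    apply Setoid.ext; intro u v
    show a.r (Sum.inr (Sum.elim id id u)) (Sum.inr (Sum.elim id id v)) ↔
      Sum.elim id id u = Sum.elim id id v
    exact h _ _

lemma trivKer_iff (a : Ptn n) :
    idOf (kerP a) = onePtn n ↔ ∀ x y : Fin n, a.r (Sum.inl x) (Sum.inl y) ↔ x = y := by
  constructor
  · intro h x y
    have h2 : (idOf (kerP a)).r (Sum.inl x) (Sum.inl y) ↔
        (onePtn n).r (Sum.inl x) (Sum.inl y) := by rw [h]
    exact h2
  · intro h
    apply Setoid.ext; intro u v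
    show a.r (Sum.inl (Sum.elim id id u)) (Sum.inl (Sum.elim id id v)) ↔
      Sum.elim id id u = Sum.elim id id v
    exact h _ _

lemma toPtn_fullDom (f : Fin n → Fin n) : FullDom (toPtn f) :=
  fun x => ⟨f x, rfl⟩

lemma eq_toPtn (a : Ptn n) (f : Fin n → Fin n)
    (hf : ∀ x, a.r (Sum.inl x) (Sum.inr (f x)))
    (hc : ∀ y z, a.r (Sum.inr y) (Sum.inr z) → y = z) :
    a = toPtn f := by
  apply Setoid.ext; intro u v
  show a.r u v ↔ Sum.elim f id u = Sum.elim f id v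
  rcases u with x | y <;> rcases v with x' | y'
  · show a.r (Sum.inl x) (Sum.inl x') ↔ f x = f x'
    constructor
    · intro h
      exact hc _ _ (a.iseqv.trans (a.iseqv.symm (hf x)) (a.iseqv.trans h (hf x')))
    · intro h
      exact a.iseqv.trans (hf x) (by rw [h]; exact a.iseqv.symm (hf x'))
  · show a.r (Sum.inl x) (Sum.inr y') ↔ f x = y'
    constructor
    · intro h; exact hc _ _ (a.iseqv.trans (a.iseqv.symm (hf x)) h)
    · intro h; rw [← h]; exact hf x
  · show a.r (Sum.inr y) (Sum.inl x') ↔ y = f x'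
    constructor
    · intro h; exact hc _ _ (a.iseqv.trans h (hf x'))
    · intro h; rw [h]; exact a.iseqv.symm (hf x')
  · show a.r (Sum.inr y) (Sum.inr y') ↔ y = y'
    constructor
    · exact hc _ _
    · intro h; rw [h]

lemma isPerm_of (a : Ptn n) (hfd : FullDom a)
    (hk : ∀ x y : Fin n, a.r (Sum.inl x) (Sum.inl y) → x = y) : IsPermPtn a := by
  choose f hf using hfd
  have hinj : Function.Injective f := by
    intro x y h
    exact hk x y (a.iseqv.trans (hf x) (by rw [h]; exact a.iseqv.symm (hf y)))
  have hbij : Function.Bijective f := Finite.injective_iff_bijective.mp hinj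
  have hc : ∀ y z, a.r (Sum.inr y) (Sum.inr z) → y = z := by
    intro y z h
    obtain ⟨x, hx⟩ := hbij.2 y
    obtain ⟨x', hx'⟩ := hbij.2 z
    have hxy : a.r (Sum.inl x) (Sum.inr y) := by rw [← hx]; exact hf x
    have hxz : a.r (Sum.inl x') (Sum.inr z) := by rw [← hx']; exact hf x'
    have h1 : a.r (Sum.inl x) (Sum.inl x') :=
      a.iseqv.trans hxy (a.iseqv.trans h (a.iseqv.symm hxz))
    rw [← hx, ← hx', hk _ _ h1]
  have haf : a = toPtn f := eq_toPtn a f hf hc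
  exact ⟨Equiv.ofBijective f hbij, haf⟩

lemma ker_triv_of_perm (a : Ptn n) (h : IsPermPtn a) :
    ∀ x y : Fin n, a.r (Sum.inl x) (Sum.inl y) → x = y := by
  obtain ⟨g, rfl⟩ := h
  intro x y hxy
  exact g.injective hxy

lemma pmul_formula (f : Fin n → Fin n) (ε : Setoid (Fin n)) :
    pmul (toPtn f) (idOf ε) =
      Setoid.ker (fun u : V n => Quotient.mk ε (Sum.elim f id u)) := by
  apply Setoid.ext; intro u v
  show Relation.EqvGen (joinRel (toPtn f) (idOf ε)) (outer u) (outer v) ↔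
    Quotient.mk ε (Sum.elim f id u) = Quotient.mk ε (Sum.elim f id v)
  set Φ : W3 n → Quotient ε :=
    Sum.elim (fun x => Quotient.mk ε (f x))
      (Sum.elim (fun y => Quotient.mk ε y) (fun y => Quotient.mk ε y)) with hΦ
  have keyA : ∀ w : V n, Φ (upMid w) = Quotient.mk ε (Sum.elim f id w) := by
    rintro (x | y) <;> rfl
  have keyB : ∀ w : V n, Φ (midLow w) = Quotient.mk ε (Sum.elim id id w) := by
    rintro (x | y) <;> rfl
  have keyO : ∀ w : V n, Φ (outer w) = Quotient.mk ε (Sum.elim f id w) := by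
    rintro (x | y) <;> rfl
  have hedge : ∀ p q : W3 n, joinRel (toPtn f) (idOf ε) p q → Φ p = Φ q := by
    intro p q hpq
    obtain ⟨s, t, hst, hu, hv⟩ | ⟨s, t, hst, hu, hv⟩ := hpq
    · subst hu; subst hv
      have h' : Sum.elim f id s = Sum.elim f id t := hst
      rw [keyA, keyA, h']
    · subst hu; subst hv
      have h' : ε.r (Sum.elim id id s) (Sum.elim id id t) := hst
      rw [keyB, keyB]
      exact Quotient.sound h'
  have gen : ∀ p q : W3 n,
      Relation.EqvGen (joinRel (toPtn f) (idOf ε)) p q → Φ p = Φ q := by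
    intro p q h
    induction h with
    | rel p q hpq => exact hedge p q hpq
    | refl p => rfl
    | symm p q _ ih => exact ih.symm
    | trans p q r _ _ ih1 ih2 => exact ih1.trans ih2
  constructor
  · intro h
    have := gen _ _ h
    rw [keyO, keyO] at this
    exact this
  · intro h
    have hε : ε.r (Sum.elim f id u) (Sum.elim f id v) := Quotient.exact h
    have e2 : ∀ y z : Fin n, ε.r y z →
        Relation.EqvGen (joinRel (toPtn f) (idOf ε))
          (Sum.inr (Sum.inl y)) (Sum.inr (Sum.inr z)) := by
      intro y z hyz
      exact Relation.EqvGen.rel _ _ (Or.inr ⟨Sum.inl y, Sum.inr z, hyz, rfl, rfl⟩)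
    have e0 : ∀ w : V n,
        Relation.EqvGen (joinRel (toPtn f) (idOf ε))
          (outer w) (Sum.inr (Sum.inl (Sum.elim f id w))) := by
      rintro (x | y)
      · exact Relation.EqvGen.rel _ _ (Or.inl ⟨Sum.inl x, Sum.inr (f x), rfl, rfl, rfl⟩)
      · exact Relation.EqvGen.symm _ _ (e2 y y (ε.iseqv.refl y))
    have c1 := e0 u
    have c2 := e2 _ _ hε
    have c3 := Relation.EqvGen.symm _ _
      (e2 (Sum.elim f id v) (Sum.elim f id v) (ε.iseqv.refl _))
    have c4 := Relation.EqvGen.symm _ _ (e0 v)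
    exact Relation.EqvGen.trans _ _ _ c1
      (Relation.EqvGen.trans _ _ _ c2 (Relation.EqvGen.trans _ _ _ c3 c4))

lemma eq_kerQ (a : Ptn n) (f : Fin n → Fin n)
    (hf : ∀ x, a.r (Sum.inl x) (Sum.inr (f x))) :
    a = Setoid.ker (fun u : V n => Quotient.mk (cokerP a) (Sum.elim f id u)) := by
  apply Setoid.ext; intro u v
  show a.r u v ↔
    Quotient.mk (cokerP a) (Sum.elim f id u) = Quotient.mk (cokerP a) (Sum.elim f id v)
  have key : ∀ w : V n, a.r w (Sum.inr (Sum.elim f id w)) := by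
    rintro (x | y)
    · exact hf x
    · exact a.iseqv.refl _
  constructor
  · intro h
    apply Quotient.sound
    show a.r (Sum.inr (Sum.elim f id u)) (Sum.inr (Sum.elim f id v))
    exact a.iseqv.trans (a.iseqv.symm (key u)) (a.iseqv.trans h (key v))
  · intro h
    have h0 : (cokerP a).r (Sum.elim f id u) (Sum.elim f id v) := Quotient.exact h
    have h' : a.r (Sum.inr (Sum.elim f id u)) (Sum.inr (Sum.elim f id v)) := h0
    exact a.iseqv.trans (key u) (a.iseqv.trans h' (a.iseqv.symm (key v)))

lemma factor (a : Ptn n) (f : Fin n → Fin n)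
    (hf : ∀ x, a.r (Sum.inl x) (Sum.inr (f x))) :
    a = pmul (toPtn f) (idOf (cokerP a)) := by
  rw [pmul_formula]
  exact eq_kerQ a f hf

end Helpers

/-- Proposition `prop:TPnfd`.  With `D(a) = id_{ker a}` and
`R(a) = id_{coker a}`:
(1) `T(P_n^fd) = {a ∈ P_n^fd : R(a) = 1} = T_n`;
(2) `I(P_n^fd) = {a ∈ P_n^fd : D(a) ≠ 1} = Sing(P_n^fd) = P_n^fd ∖ S_n`, a right
ideal of `P_n^fd`;
(3) `{a ∈ P_n^fd : D(a) ≠ 1 = R(a)} = Sing(T_n) = T_n ∖ S_n`.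
Moreover `P_n^fd = T_n E_n` and `Sing(P_n^fd) = Sing(T_n) E_n`. -/
theorem stmt11 (n : ℕ) (hn : 2 ≤ n) :
    ({a : Ptn n | FullDom a ∧ idOf (cokerP a) = onePtn n} = TSet n) ∧
    ({a : Ptn n | FullDom a ∧ idOf (kerP a) ≠ onePtn n} = SingPfd n) ∧
    (∀ a ∈ SingPfd n, ∀ b ∈ Pfd n, pmul a b ∈ SingPfd n) ∧
    ({a : Ptn n | FullDom a ∧ idOf (kerP a) ≠ onePtn n ∧ idOf (cokerP a) = onePtn n}
        = SingTSet n) ∧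
    (∀ a ∈ Pfd n, ∃ (f : Fin n → Fin n) (ε : Setoid (Fin n)),
        a = pmul (toPtn f) (idOf ε)) ∧
    (∀ a ∈ SingPfd n, ∃ (f : Fin n → Fin n) (ε : Setoid (Fin n)),
        ¬ Function.Bijective f ∧ a = pmul (toPtn f) (idOf ε)) := by
  refine ⟨?_, ?_, ?_, ?_, ?_, ?_⟩
  · -- (1)
    ext a
    constructor
    · rintro ⟨hfd, hco⟩
      have hc := (trivCoker_iff a).mp hco
      choose f hf using hfd
      exact ⟨f, eq_toPtn a f hf (fun y z h => (hc y z).mp h)⟩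
    · rintro ⟨f, rfl⟩
      exact ⟨toPtn_fullDom f, (trivCoker_iff _).mpr (fun y z => Iff.rfl)⟩
  · -- (2)
    ext a
    constructor
    · rintro ⟨hfd, hk⟩
      refine ⟨hfd, fun hperm => hk ?_⟩
      refine (trivKer_iff a).mpr (fun x y => ⟨ker_triv_of_perm a hperm x y, ?_⟩)
      intro h; cases h; exact a.iseqv.refl _
    · rintro ⟨hfd, hnp⟩
      refine ⟨hfd, fun h => hnp ?_⟩
      exact isPerm_of a hfd (fun x y hxy => ((trivKer_iff a).mp h x y).mp hxy)
  · -- right ideal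
    rintro a ⟨hfd, hnp⟩ b hb
    have hker : ¬ (∀ x y : Fin n, a.r (Sum.inl x) (Sum.inl y) → x = y) :=
      fun h => hnp (isPerm_of a hfd h)
    push_neg at hker
    obtain ⟨x, y, hxy, hne⟩ := hker
    constructor
    · intro z
      obtain ⟨w, hw⟩ := hfd z
      obtain ⟨w', hw'⟩ := hb w
      refine ⟨w', ?_⟩
      show Relation.EqvGen (joinRel a b) (outer (Sum.inl z)) (outer (Sum.inr w'))
      refine Relation.EqvGen.trans _ (Sum.inr (Sum.inl w)) _ ?_ ?_
      · exact Relation.EqvGen.rel _ _ (Or.inl ⟨Sum.inl z, Sum.inr w, hw, rfl, rfl⟩)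
      · exact Relation.EqvGen.rel _ _ (Or.inr ⟨Sum.inl w, Sum.inr w', hw', rfl, rfl⟩)
    · rintro ⟨g, hg⟩
      have hrel : (pmul a b).r (Sum.inl x) (Sum.inl y) :=
        Relation.EqvGen.rel _ _ (Or.inl ⟨Sum.inl x, Sum.inl y, hxy, rfl, rfl⟩)
      rw [hg] at hrel
      exact hne (g.injective hrel)
  · -- (3)
    ext a
    constructor
    · rintro ⟨hfd, hk, hco⟩
      have hc := (trivCoker_iff a).mp hco
      choose f hf using hfd
      have haf : a = toPtn f := eq_toPtn a f hf (fun y z h => (hc y z).mp h)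
      refine ⟨f, haf, fun hbij => hk ?_⟩
      rw [haf]
      refine (trivKer_iff _).mpr (fun x y => ⟨fun h => hbij.1 h, ?_⟩)
      intro h; exact congrArg f h
    · rintro ⟨f, rfl, hnb⟩
      refine ⟨toPtn_fullDom f, ?_, (trivCoker_iff _).mpr (fun y z => Iff.rfl)⟩
      intro h
      apply hnb
      apply Finite.injective_iff_bijective.mp
      intro x y hxy
      exact ((trivKer_iff _).mp h x y).mp hxy
  · -- factorization
    intro a ha
    have hfd : FullDom a := ha
    choose f hf using hfd
    exact ⟨f, cokerP a, factor a f hf⟩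
  · -- singular factorization
    rintro a ⟨hfd, hnp⟩
    have hker : ¬ (∀ x y : Fin n, a.r (Sum.inl x) (Sum.inl y) → x = y) :=
      fun h => hnp (isPerm_of a hfd h)
    push_neg at hker
    obtain ⟨i, j, hij, hne⟩ := hker
    choose f hf using hfd
    refine ⟨fun x => if x = j then f i else f x, cokerP a, ?_, ?_⟩
    · intro hb
      apply hne
      apply hb.1
      show (if i = j then f i else f i) = (if j = j then f i else f j)
      simp
    · apply factor
      intro x
      show a.r (Sum.inl x) (Sum.inr (if x = j then f i else f x))
      by_cases hx : x = j
      · rw [if_pos hx, hx]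
        exact a.iseqv.trans (a.iseqv.symm hij) (hf i)
      · rw [if_neg hx]
        exact hf x


end PaperFDP
end

section
/- Let n ≥ 2, let S = T_n or S = Sing(T_n) (viewed inside P_n^fd), and let u = id_ε for an equivalence ε on {1,…,n}. Then θ_u = {(a,b) ∈ S¹ × S¹ : su = tu, products in P_n^fd} is given by θ_u = {(a,b) ∈ S¹ × S¹ : (xa, xb) ∈ ε for all x ∈ {1,…,n}}. -/
open scoped Classical

namespace PaperFDP

/-- `Sing(T_n)¹ = Sing(T_n) ∪ {1}`, embedded in `P_n^fd`. -/
def SingT1 (n : ℕ) : Set (Ptn n) :=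
  {a | ∃ f : Fin n → Fin n, a = toPtn f ∧ ¬ Function.Bijective f} ∪ {onePtn n}

section Key
variable {n : ℕ} (f : Fin n → Fin n) (ε : Setoid (Fin n))

/-- Value map on the three-row vertex set. -/
private def hmap (f : Fin n → Fin n) : W3 n → Fin n :=
  Sum.elim f (Sum.elim id id)

private lemma key (f : Fin n → Fin n) (ε : Setoid (Fin n)) :
    pmul (toPtn f) (idOf ε) = Setoid.comap (Sum.elim f id) ε := by
  apply Setoid.ext
  intro p q
  constructor
  · intro hgen
    have main : ∀ u v : W3 n,
        Relation.EqvGen (joinRel (toPtn f) (idOf ε)) u v → ε.r (hmap f u) (hmap f v) := by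
      intro u v h
      induction h with
      | rel u v h =>
        rcases h with ⟨a, b, hab, hu, hv⟩ | ⟨a, b, hab, hu, hv⟩
        · subst hu; subst hv
          have h1 : ∀ p : V n, hmap f (upMid p) = Sum.elim f id p := by
            intro p; cases p <;> rfl
          rw [h1, h1]
          have : Sum.elim f id a = Sum.elim f id b := hab
          rw [this]
        · subst hu; subst hv
          have h1 : ∀ p : V n, hmap f (midLow p) = Sum.elim id id p := by
            intro p; cases p <;> rfl
          rw [h1, h1]
          exact hab
      | refl u => exact ε.refl _
      | symm _ _ _ ih => exact ε.symm ih
      | trans _ _ _ _ _ ih1 ih2 => exact ε.trans ih1 ih2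
    have hh : ∀ p : V n, hmap f (outer p) = Sum.elim f id p := by
      intro p; cases p <;> rfl
    have := main _ _ hgen
    rwa [hh, hh] at this
  · intro hε
    have step : ∀ p : V n,
        Relation.EqvGen (joinRel (toPtn f) (idOf ε)) (outer p)
          (Sum.inr (Sum.inr (Sum.elim f id p))) := by
      intro p
      cases p with
      | inl x =>
        have e1 : joinRel (toPtn f) (idOf ε) (outer (Sum.inl x))
            (Sum.inr (Sum.inl (f x))) := by
          left
          exact ⟨Sum.inl x, Sum.inr (f x), rfl, rfl, rfl⟩
        have e2 : joinRel (toPtn f) (idOf ε) (Sum.inr (Sum.inl (f x)))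
            (Sum.inr (Sum.inr (f x))) := by
          right
          exact ⟨Sum.inl (f x), Sum.inr (f x), ε.refl _, rfl, rfl⟩
        exact Relation.EqvGen.trans _ _ _ (Relation.EqvGen.rel _ _ e1)
          (Relation.EqvGen.rel _ _ e2)
      | inr x => exact Relation.EqvGen.refl _
    have mid : joinRel (toPtn f) (idOf ε) (Sum.inr (Sum.inr (Sum.elim f id p)))
        (Sum.inr (Sum.inr (Sum.elim f id q))) := by
      right
      exact ⟨Sum.inr (Sum.elim f id p), Sum.inr (Sum.elim f id q), hε, rfl, rfl⟩
    exact Relation.EqvGen.trans _ _ _ (step p)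
      (Relation.EqvGen.trans _ _ _ (Relation.EqvGen.rel _ _ mid)
        (Relation.EqvGen.symm _ _ (step q)))

private lemma main_iff (f g : Fin n → Fin n) (ε : Setoid (Fin n)) :
    pmul (toPtn f) (idOf ε) = pmul (toPtn g) (idOf ε) ↔ ∀ x : Fin n, ε.r (f x) (g x) := by
  rw [key f ε, key g ε]
  constructor
  · intro h x
    have h' : ∀ p q : V n, (Setoid.comap (Sum.elim f id) ε).r p q ↔
        (Setoid.comap (Sum.elim g id) ε).r p q := by
      rw [h]; intro p q; exact Iff.rfl
    have := (h' (Sum.inl x) (Sum.inr (f x))).mp (ε.refl (f x))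
    exact ε.symm this
  · intro h
    apply Setoid.ext
    intro p q
    have hval : ∀ p : V n, ε.r (Sum.elim f id p) (Sum.elim g id p) := by
      intro p; cases p with
      | inl x => exact h x
      | inr x => exact ε.refl x
    constructor
    · intro hr
      exact ε.trans (ε.symm (hval p)) (ε.trans hr (hval q))
    · intro hr
      exact ε.trans (hval p) (ε.trans hr (ε.symm (hval q)))

end Key

/-- Lemma `lem:thu`.  For `S = T_n` or `S = Sing(T_n)` and
`u = id_ε`, the left congruence `θ_u = {(a,b) ∈ S¹ × S¹ : au = bu}` is given by
`θ_u = {(a,b) : (xa, xb) ∈ ε for all x}`.  (Elements of `S¹` are exactly the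
partitions `toPtn f` of transformations `f`, with `1 = toPtn id`.) -/
theorem stmt12 (n : ℕ) (hn : 2 ≤ n) (ε : Setoid (Fin n)) :
    (∀ f g : Fin n → Fin n,
      pmul (toPtn f) (idOf ε) = pmul (toPtn g) (idOf ε) ↔ ∀ x : Fin n, ε.r (f x) (g x)) ∧
    (∀ f g : Fin n → Fin n, toPtn f ∈ SingT1 n → toPtn g ∈ SingT1 n →
      (pmul (toPtn f) (idOf ε) = pmul (toPtn g) (idOf ε) ↔ ∀ x : Fin n, ε.r (f x) (g x))) := by
  exact ⟨fun f g => main_iff f g ε, fun f g _ _ => main_iff f g ε⟩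

end PaperFDP
end

section
/- Let n ≥ 2, let S = T_n or S = Sing(T_n) (viewed inside P_n^fd), and let ε be an equivalence on {1,…,n}. Then θ_{id_ε} = (1,f)^lc for any idempotent transformation f ∈ T_n with ker(f) = ε (i.e. xf = yf iff (x,y) ∈ ε). In particular, for 1 ≤ i < j ≤ n, θ_{ē_ij} = (1, t̄_ij)^lc, where ē_ij = id_{η_ij} is the partition with block {i,j,i′,j′} and blocks {x,x′} for x ∉ {i,j}, and t̄_ij ∈ T_n maps j ↦ i and fixes all other points. -/
open scoped Classical

namespace PaperFDP

/-- `σ` is a left congruence on the subset `T` of partitions (with multiplication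
`pmul`). -/
def IsLeftCongP {n : ℕ} (T : Set (Ptn n)) (σ : Ptn n → Ptn n → Prop) : Prop :=
  (∀ a b, σ a b → a ∈ T ∧ b ∈ T) ∧ (∀ a ∈ T, σ a a) ∧
    (∀ a b, σ a b → σ b a) ∧ (∀ a b c, σ a b → σ b c → σ a c) ∧
    (∀ c ∈ T, ∀ a b, σ a b → σ (pmul c a) (pmul c b))

/-- The least left congruence on `T` containing the pairs `P`. -/
def lcGenP {n : ℕ} (T : Set (Ptn n)) (P : Set (Ptn n × Ptn n)) (a b : Ptn n) : Prop :=
  ∀ σ : Ptn n → Ptn n → Prop, IsLeftCongP T σ → (∀ p ∈ P, σ p.1 p.2) → σ a b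


section Aux

variable {n : ℕ}

/-- The map collapsing the three rows onto `a = toPtn g`'s "value": top `x` goes to
`inl (g x)`, middle `p` goes to `inl p`, bottom `p` goes to `inr p`. -/
private def phi (g : Fin n → Fin n) : W3 n → V n :=
  Sum.elim (fun x => Sum.inl (g x)) (Sum.elim Sum.inl Sum.inr)

/-- Outer rows under `phi`: `inl x ↦ inl (g x)`, `inr y ↦ inr y`. -/
private def rho (g : Fin n → Fin n) : V n → V n :=
  Sum.elim (fun x => Sum.inl (g x)) Sum.inr

private lemma phi_outer (g : Fin n → Fin n) (w : V n) : phi g (outer w) = rho g w := by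
  cases w <;> rfl

private lemma phi_midLow (g : Fin n → Fin n) (p : V n) : phi g (midLow p) = p := by
  cases p <;> rfl

private lemma phi_upMid (g : Fin n → Fin n) (p : V n) :
    phi g (upMid p) = Sum.inl (Sum.elim g id p) := by
  cases p <;> rfl

private lemma step_phi (g : Fin n → Fin n) (b : Ptn n) {u v : W3 n}
    (h : joinRel (toPtn g) b u v) : b.r (phi g u) (phi g v) := by
  rcases h with ⟨p, q, hr, hu, hv⟩ | ⟨p, q, hr, hu, hv⟩
  · subst hu; subst hv
    rw [phi_upMid, phi_upMid]
    have : Sum.elim g id p = Sum.elim g id q := hr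
    rw [this]
  · subst hu; subst hv
    rw [phi_midLow, phi_midLow]
    exact hr

private lemma eqvGen_phi (g : Fin n → Fin n) (b : Ptn n) {u v : W3 n}
    (h : Relation.EqvGen (joinRel (toPtn g) b) u v) : b.r (phi g u) (phi g v) := by
  induction h with
  | rel _ _ h => exact step_phi g b h
  | refl _ => exact b.refl _
  | symm _ _ _ ih => exact b.symm ih
  | trans _ _ _ _ _ ih1 ih2 => exact b.trans ih1 ih2

private lemma outer_to_mid (g : Fin n → Fin n) (b : Ptn n) (w : V n) :
    Relation.EqvGen (joinRel (toPtn g) b) (outer w) (midLow (rho g w)) := by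
  cases w with
  | inl x =>
    exact Relation.EqvGen.rel _ _ (Or.inl ⟨Sum.inl x, Sum.inr (g x), rfl, rfl, rfl⟩)
  | inr y => exact Relation.EqvGen.refl _

/-- The key computation: multiplying the partition of a transformation `g` on the
left of any partition `b` just relabels the upper row of `b` through `g`. -/
lemma pmul_toPtn_left (g : Fin n → Fin n) (b : Ptn n) :
    pmul (toPtn g) b = Setoid.comap (rho g) b := by
  apply Setoid.ext
  intro u v
  constructor
  · intro h
    have h' : b.r (phi g (outer u)) (phi g (outer v)) := eqvGen_phi g b h
    rwa [phi_outer, phi_outer] at h'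
  · intro h
    refine Relation.EqvGen.trans _ _ _ (outer_to_mid g b u)
      (Relation.EqvGen.trans _ _ _ ?_ (Relation.EqvGen.symm _ _ (outer_to_mid g b v)))
    exact Relation.EqvGen.rel _ _ (Or.inr ⟨rho g u, rho g v, h, rfl, rfl⟩)

lemma pmul_toPtn_toPtn (g h : Fin n → Fin n) :
    pmul (toPtn g) (toPtn h) = toPtn (h ∘ g) := by
  rw [pmul_toPtn_left]
  apply Setoid.ext
  intro u v
  show Sum.elim h id (rho g u) = Sum.elim h id (rho g v) ↔
    Sum.elim (h ∘ g) id u = Sum.elim (h ∘ g) id v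
  cases u <;> cases v <;> simp [rho]

lemma onePtn_eq_toPtn_id : onePtn n = toPtn (id : Fin n → Fin n) := rfl

lemma pmul_toPtn_idOf (g : Fin n → Fin n) (ε : Setoid (Fin n)) :
    pmul (toPtn g) (idOf ε) = Setoid.comap (Sum.elim g id) ε := by
  rw [pmul_toPtn_left]
  apply Setoid.ext
  intro u v
  show ε.r (Sum.elim id id (rho g u)) (Sum.elim id id (rho g v)) ↔
    ε.r (Sum.elim g id u) (Sum.elim g id v)
  cases u <;> cases v <;> exact Iff.rfl

lemma comap_eq_iff (g h : Fin n → Fin n) (ε : Setoid (Fin n)) :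
    pmul (toPtn g) (idOf ε) = pmul (toPtn h) (idOf ε) ↔ ∀ x, ε.r (g x) (h x) := by
  rw [pmul_toPtn_idOf, pmul_toPtn_idOf]
  constructor
  · intro he x
    have := congrArg (fun s : Ptn n => s.r (Sum.inl x) (Sum.inr (g x))) he
    simp only [eq_iff_iff] at this
    have h1 : ε.r (Sum.elim g id (Sum.inl x)) (Sum.elim g id (Sum.inr (g x))) := ε.refl _
    have h2 : ε.r (Sum.elim h id (Sum.inl x)) (Sum.elim h id (Sum.inr (g x))) := this.mp h1
    exact ε.symm h2
  · intro he
    apply Setoid.ext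
    intro u v
    show ε.r (Sum.elim g id u) (Sum.elim g id v) ↔ ε.r (Sum.elim h id u) (Sum.elim h id v)
    cases u <;> cases v <;>
      constructor <;> intro hr <;>
      · first
        | exact hr
        | exact ε.trans (ε.symm (he _)) (ε.trans hr (he _))
        | exact ε.trans (he _) (ε.trans hr (ε.symm (he _)))
        | exact ε.trans (ε.symm (he _)) hr
        | exact ε.trans (he _) hr
        | exact ε.trans hr (he _)
        | exact ε.trans hr (ε.symm (he _))

/-- The common core: for any suitable submonoid `T`, `θ_{id_ε} = (1, f)^lc`. -/
lemma key_lemma (T : Set (Ptn n))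
    (hone : onePtn n ∈ T)
    (hT : ∀ a ∈ T, ∃ g : Fin n → Fin n, a = toPtn g)
    (hmul : ∀ a ∈ T, ∀ b ∈ T, pmul a b ∈ T)
    (ε : Setoid (Fin n)) (f : Fin n → Fin n) (hf : f ∘ f = f)
    (hker : ∀ x y : Fin n, f x = f y ↔ ε.r x y)
    (hfT : toPtn f ∈ T) :
    ∀ a b : Ptn n,
      (a ∈ T ∧ b ∈ T ∧ pmul a (idOf ε) = pmul b (idOf ε)) ↔
        lcGenP T {(onePtn n, toPtn f)} a b := by
  have hεf : ∀ x, ε.r x (f x) := fun x => (hker x (f x)).mp (congrFun hf.symm x)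
  intro a b
  constructor
  · rintro ⟨ha, hb, hab⟩
    obtain ⟨g, rfl⟩ := hT a ha
    obtain ⟨h, rfl⟩ := hT b hb
    have hε : ∀ x, ε.r (g x) (h x) := (comap_eq_iff g h ε).mp hab
    have hfg : f ∘ g = f ∘ h := funext fun x => (hker (g x) (h x)).mpr (hε x)
    intro σ hσ hgen
    obtain ⟨hdom, hrefl, hsymm, htrans, hleft⟩ := hσ
    have h1 : σ (onePtn n) (toPtn f) := hgen _ rfl
    have hg1 : σ (pmul (toPtn g) (onePtn n)) (pmul (toPtn g) (toPtn f)) := hleft _ ha _ _ h1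
    have hh1 : σ (pmul (toPtn h) (onePtn n)) (pmul (toPtn h) (toPtn f)) := hleft _ hb _ _ h1
    rw [onePtn_eq_toPtn_id, pmul_toPtn_toPtn, pmul_toPtn_toPtn] at hg1 hh1
    have hg1 : σ (toPtn g) (toPtn (f ∘ g)) := hg1
    have hh1 : σ (toPtn h) (toPtn (f ∘ h)) := hh1
    rw [hfg] at hg1
    exact htrans _ _ _ hg1 (hsymm _ _ hh1)
  · intro hlc
    refine hlc (fun a b => a ∈ T ∧ b ∈ T ∧ pmul a (idOf ε) = pmul b (idOf ε))
      ⟨fun a b hab => ⟨hab.1, hab.2.1⟩,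
       fun a ha => ⟨ha, ha, rfl⟩,
       fun a b hab => ⟨hab.2.1, hab.1, hab.2.2.symm⟩,
       fun a b c hab hbc => ⟨hab.1, hbc.2.1, hab.2.2.trans hbc.2.2⟩,
       ?_⟩ ?_
    · intro c hc a b hab
      obtain ⟨ha, hb, habε⟩ := hab
      obtain ⟨k, rfl⟩ := hT c hc
      obtain ⟨g, rfl⟩ := hT a ha
      obtain ⟨h, rfl⟩ := hT b hb
      refine ⟨hmul _ hc _ ha, hmul _ hc _ hb, ?_⟩
      rw [pmul_toPtn_toPtn, pmul_toPtn_toPtn]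
      rw [comap_eq_iff] at habε ⊢
      exact fun x => habε (k x)
    · rintro p rfl
      refine ⟨hone, hfT, ?_⟩
      rw [onePtn_eq_toPtn_id, comap_eq_iff]
      intro x
      exact hεf x

end Aux


/-- Lemma `lem:thuij`.  For `S = T_n` or `Sing(T_n)`, and any
equivalence `ε`, we have `θ_{id_ε} = (1,f)^lc` for any idempotent `f ∈ T_n` with
`ker f = ε`.  In particular `θ_{ē_ij} = (1, t̄_ij)^lc` for `i < j`. -/
theorem stmt14 (n : ℕ) (hn : 2 ≤ n) :
    (∀ (ε : Setoid (Fin n)) (f : Fin n → Fin n), f ∘ f = f →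
      (∀ x y : Fin n, f x = f y ↔ ε.r x y) →
      (∀ a b : Ptn n,
        (a ∈ TSet n ∧ b ∈ TSet n ∧ pmul a (idOf ε) = pmul b (idOf ε)) ↔
          lcGenP (TSet n) {(onePtn n, toPtn f)} a b) ∧
      (∀ a b : Ptn n,
        (a ∈ SingT1 n ∧ b ∈ SingT1 n ∧ pmul a (idOf ε) = pmul b (idOf ε)) ↔
          lcGenP (SingT1 n) {(onePtn n, toPtn f)} a b)) ∧
    (∀ i j : Fin n, i < j →
      (∀ a b : Ptn n,
        (a ∈ TSet n ∧ b ∈ TSet n ∧ pmul a (ebar i j) = pmul b (ebar i j)) ↔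
          lcGenP (TSet n) {(onePtn n, tbar i j)} a b) ∧
      (∀ a b : Ptn n,
        (a ∈ SingT1 n ∧ b ∈ SingT1 n ∧ pmul a (ebar i j) = pmul b (ebar i j)) ↔
          lcGenP (SingT1 n) {(onePtn n, tbar i j)} a b)) := by
  have main : ∀ (ε : Setoid (Fin n)) (f : Fin n → Fin n), f ∘ f = f →
      (∀ x y : Fin n, f x = f y ↔ ε.r x y) →
      (∀ a b : Ptn n,
        (a ∈ TSet n ∧ b ∈ TSet n ∧ pmul a (idOf ε) = pmul b (idOf ε)) ↔
          lcGenP (TSet n) {(onePtn n, toPtn f)} a b) ∧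
      (∀ a b : Ptn n,
        (a ∈ SingT1 n ∧ b ∈ SingT1 n ∧ pmul a (idOf ε) = pmul b (idOf ε)) ↔
          lcGenP (SingT1 n) {(onePtn n, toPtn f)} a b) := by
    intro ε f hf hker
    have hfT1 : toPtn f ∈ SingT1 n := by
      by_cases hbij : Function.Bijective f
      · right
        have hfid : f = id := by
          funext x
          have h1 := congrFun hf (Function.surjInv hbij.surjective x)
          rw [Function.comp_apply, Function.surjInv_eq hbij.surjective x] at h1
          exact h1
        rw [hfid]
        exact (onePtn_eq_toPtn_id).symm
      · exact Or.inl ⟨f, rfl, hbij⟩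
    constructor
    · exact key_lemma (TSet n) ⟨id, rfl⟩ (fun a ha => ha)
        (fun a ⟨g, hg⟩ b ⟨h, hh⟩ => ⟨h ∘ g, by rw [hg, hh, pmul_toPtn_toPtn]⟩)
        ε f hf hker ⟨f, rfl⟩
    · refine key_lemma (SingT1 n) (Or.inr rfl) ?_ ?_ ε f hf hker hfT1
      · rintro a (⟨g, rfl, -⟩ | rfl)
        · exact ⟨g, rfl⟩
        · exact ⟨id, rfl⟩
      · rintro a (⟨g, rfl, hg⟩ | rfl) b hb
        · rcases hb with ⟨h, rfl, hh⟩ | rfl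
          · left
            refine ⟨h ∘ g, pmul_toPtn_toPtn g h, fun hc => hh ?_⟩
            exact Finite.surjective_iff_bijective.mp
              (Function.Surjective.of_comp hc.surjective)
          · left
            refine ⟨id ∘ g, by rw [onePtn_eq_toPtn_id, pmul_toPtn_toPtn], fun hc => hg ?_⟩
            simpa using hc
        · rcases hb with ⟨h, rfl, hh⟩ | rfl
          · exact Or.inl ⟨h ∘ id, by rw [onePtn_eq_toPtn_id, pmul_toPtn_toPtn],
              by simpa using hh⟩
          · exact Or.inr (by
              rw [onePtn_eq_toPtn_id, pmul_toPtn_toPtn]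
              exact (onePtn_eq_toPtn_id).symm)
  refine ⟨main, ?_⟩
  intro i j hij
  have hne : i ≠ j := ne_of_lt hij
  have hf : (fun x : Fin n => if x = j then i else x) ∘
      (fun x : Fin n => if x = j then i else x) = fun x : Fin n => if x = j then i else x := by
    funext x
    by_cases hx : x = j
    · subst hx; simp [hne]
    · simp [hx]
  have hker : ∀ x y : Fin n, (if x = j then i else x) = (if y = j then i else y) ↔
      (etaOf i j).r x y := fun x y => Iff.rfl
  exact main (etaOf i j) (fun x => if x = j then i else x) hf hker


end PaperFDP
end

section
/- Let n ≥ 2 and let a ∈ PP_n^fd. Then a ∈ D_n if and only if every transversal block A ∪ B′ of a satisfies min(A) = min(B) and max(A) = max(B). In that case, coker(a) is a planar equivalence and a = d_η where η = coker(a). -/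
open scoped Classical

namespace PaperFDP

/-- The `ε`-class of `x`, as a set. -/
def clsS {n : ℕ} (ε : Setoid (Fin n)) (x : Fin n) : Set (Fin n) := {y | ε.r x y}

/-- Two sets are separated if one lies entirely below the other. -/
def SepSets {n : ℕ} (A B : Set (Fin n)) : Prop :=
  (∀ a ∈ A, ∀ b ∈ B, a < b) ∨ (∀ a ∈ A, ∀ b ∈ B, b < a)

/-- `A` is nested by `B`: all of `A` lies strictly between two consecutive elements of `B`. -/
def NestedBy {n : ℕ} (A B : Set (Fin n)) : Prop :=
  ∃ b₁ ∈ B, ∃ b₂ ∈ B, b₁ < b₂ ∧ (∀ b ∈ B, ¬ (b₁ < b ∧ b < b₂)) ∧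
    ∀ a ∈ A, b₁ < a ∧ a < b₂

/-- An equivalence is planar if any two of its classes are nested or separated. -/
def IsPlanarEq {n : ℕ} (ε : Setoid (Fin n)) : Prop :=
  ∀ x y : Fin n, ¬ ε.r x y →
    SepSets (clsS ε x) (clsS ε y) ∨ NestedBy (clsS ε x) (clsS ε y) ∨
      NestedBy (clsS ε y) (clsS ε x)

/-- The class of `x` is un-nested (nested by no other class). -/
def Unnested {n : ℕ} (ε : Setoid (Fin n)) (x : Fin n) : Prop :=
  ∀ y : Fin n, ¬ NestedBy (clsS ε x) (clsS ε y)

/-- The minimum of the `ε`-class of `x`. -/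
noncomputable def minCl {n : ℕ} (ε : Setoid (Fin n)) (x : Fin n) : Fin n :=
  (Finset.univ.filter fun y => ε.r x y).min'
    ⟨x, Finset.mem_filter.mpr ⟨Finset.mem_univ x, ε.iseqv.refl x⟩⟩

/-- The maximum of the `ε`-class of `x`. -/
noncomputable def maxCl {n : ℕ} (ε : Setoid (Fin n)) (x : Fin n) : Fin n :=
  (Finset.univ.filter fun y => ε.r x y).max'
    ⟨x, Finset.mem_filter.mpr ⟨Finset.mem_univ x, ε.iseqv.refl x⟩⟩

/-- The minima of the un-nested `ε`-classes. -/
noncomputable def anchorsF {n : ℕ} (ε : Setoid (Fin n)) : Finset (Fin n) :=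
  Finset.univ.filter fun y => Unnested ε y ∧ minCl ε y = y

/-- The largest minimum-of-an-un-nested-class that is `≤ x`.  (For a planar
equivalence this always exists; junk default otherwise.) -/
noncomputable def anchorBelow {n : ℕ} [NeZero n] (ε : Setoid (Fin n)) (x : Fin n) : Fin n :=
  if h : ((anchorsF ε).filter (· ≤ x)).Nonempty then ((anchorsF ε).filter (· ≤ x)).max' h
  else 0

/-- The "block" map defining `d_η`: an upper vertex `x` goes to the interval
`A_i = [min B_i, max B_i]` (of the un-nested class `B_i`) containing it; a lower
vertex `x'` goes to the `η`-class of `x`.  Blocks are labelled by the minimum of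
the corresponding un-nested class, resp. class. -/
noncomputable def dMap {n : ℕ} [NeZero n] (ε : Setoid (Fin n)) : V n → Fin n :=
  Sum.elim (fun x => anchorBelow ε x) fun x => minCl ε x

/-- The partition `d_η ∈ PP_n^fd`, with blocks `A_i ∪ B_i'` for the un-nested
`η`-classes `B_i` (where `A_i = [min B_i, max B_i]`), and `C'` for the nested
`η`-classes `C`. -/
noncomputable def dEta {n : ℕ} [NeZero n] (ε : Setoid (Fin n)) : Ptn n :=
  Setoid.ker (dMap ε)

/-- `h̄_ij = d_{η_ij}`. -/
noncomputable def hbar {n : ℕ} [NeZero n] (i j : Fin n) : Ptn n := dEta (etaOf i j)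

/-- The monoid `D_n = {d_η : η a planar equivalence}`, as a subset of `PP_n^fd`. -/
def DSet (n : ℕ) [NeZero n] : Set (Ptn n) :=
  {a | ∃ ε : Setoid (Fin n), IsPlanarEq ε ∧ a = dEta ε}

end PaperFDP

namespace PaperFDP

/-- Every transversal block `A ∪ B'` of `a` satisfies `min A = min B` and
`max A = max B`.  (Phrased via mutual domination: every upper element of the block
has a lower element below it and vice versa, and dually for maxima.) -/
def GoodTrans {n : ℕ} (a : Ptn n) : Prop :=
  ∀ x y : Fin n, a.r (Sum.inl x) (Sum.inr y) →
    (∀ z : Fin n, a.r (Sum.inl x) (Sum.inl z) →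
      ∃ w : Fin n, a.r (Sum.inl x) (Sum.inr w) ∧ w ≤ z) ∧
    (∀ w : Fin n, a.r (Sum.inl x) (Sum.inr w) →
      ∃ z : Fin n, a.r (Sum.inl x) (Sum.inl z) ∧ z ≤ w) ∧
    (∀ z : Fin n, a.r (Sum.inl x) (Sum.inl z) →
      ∃ w : Fin n, a.r (Sum.inl x) (Sum.inr w) ∧ z ≤ w) ∧
    (∀ w : Fin n, a.r (Sum.inl x) (Sum.inr w) →
      ∃ z : Fin n, a.r (Sum.inl x) (Sum.inl z) ∧ w ≤ z)

section Aux

variable {n : ℕ}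

lemma rel_clsS {ε : Setoid (Fin n)} {x y : Fin n} (h : ε.r x y) : y ∈ clsS ε x := h

lemma clsS_congr {ε : Setoid (Fin n)} {x y : Fin n} (h : ε.r x y) : clsS ε x = clsS ε y :=
  Set.ext fun w => ⟨fun hw => ε.iseqv.trans (ε.iseqv.symm h) hw, fun hw => ε.iseqv.trans h hw⟩

lemma minCl_rel (ε : Setoid (Fin n)) (x : Fin n) : ε.r x (minCl ε x) := by
  have h : minCl ε x ∈ Finset.univ.filter fun y => ε.r x y := Finset.min'_mem _ _
  exact (Finset.mem_filter.mp h).2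

lemma minCl_le {ε : Setoid (Fin n)} {x y : Fin n} (h : ε.r x y) : minCl ε x ≤ y :=
  Finset.min'_le _ _ (Finset.mem_filter.mpr ⟨Finset.mem_univ _, h⟩)

lemma minCl_le_self (ε : Setoid (Fin n)) (x : Fin n) : minCl ε x ≤ x :=
  minCl_le (ε.iseqv.refl x)

lemma maxCl_rel (ε : Setoid (Fin n)) (x : Fin n) : ε.r x (maxCl ε x) := by
  have h : maxCl ε x ∈ Finset.univ.filter fun y => ε.r x y := Finset.max'_mem _ _
  exact (Finset.mem_filter.mp h).2

lemma le_maxCl {ε : Setoid (Fin n)} {x y : Fin n} (h : ε.r x y) : y ≤ maxCl ε x :=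
  Finset.le_max' _ _ (Finset.mem_filter.mpr ⟨Finset.mem_univ _, h⟩)

lemma self_le_maxCl (ε : Setoid (Fin n)) (x : Fin n) : x ≤ maxCl ε x :=
  le_maxCl (ε.iseqv.refl x)

lemma minCl_congr {ε : Setoid (Fin n)} {x y : Fin n} (h : ε.r x y) : minCl ε x = minCl ε y :=
  le_antisymm (minCl_le (ε.iseqv.trans h (minCl_rel ε y)))
    (minCl_le (ε.iseqv.trans (ε.iseqv.symm h) (minCl_rel ε x)))

lemma maxCl_congr {ε : Setoid (Fin n)} {x y : Fin n} (h : ε.r x y) : maxCl ε x = maxCl ε y :=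
  le_antisymm (le_maxCl (ε.iseqv.trans (ε.iseqv.symm h) (maxCl_rel ε x)))
    (le_maxCl (ε.iseqv.trans h (maxCl_rel ε y)))

lemma rel_iff_minCl {ε : Setoid (Fin n)} {x y : Fin n} : ε.r x y ↔ minCl ε x = minCl ε y := by
  constructor
  · exact minCl_congr
  · intro h
    exact ε.iseqv.trans (minCl_rel ε x) (h ▸ (ε.iseqv.symm (minCl_rel ε y)))

lemma mem_anchorsF {ε : Setoid (Fin n)} {m : Fin n} :
    m ∈ anchorsF ε ↔ Unnested ε m ∧ minCl ε m = m := by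
  simp [anchorsF]

lemma zero_mem_anchorsF [NeZero n] (ε : Setoid (Fin n)) : (0 : Fin n) ∈ anchorsF ε := by
  refine mem_anchorsF.mpr ⟨?_, le_antisymm (minCl_le_self ε 0) (Fin.zero_le _)⟩
  intro y ⟨b1, hb1, b2, hb2, hlt, hcons, hall⟩
  exact absurd (hall 0 (ε.iseqv.refl 0)).1 (by simp [Fin.lt_def])

lemma anchorBelow_spec [NeZero n] (ε : Setoid (Fin n)) (x : Fin n) :
    anchorBelow ε x ∈ anchorsF ε ∧ anchorBelow ε x ≤ x ∧
      ∀ c ∈ anchorsF ε, c ≤ x → c ≤ anchorBelow ε x := by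
  have h0 : (0:Fin n) ∈ (anchorsF ε).filter (· ≤ x) :=
    Finset.mem_filter.mpr ⟨zero_mem_anchorsF ε, Fin.zero_le x⟩
  have hne : ((anchorsF ε).filter (· ≤ x)).Nonempty := ⟨0, h0⟩
  have heq : anchorBelow ε x = ((anchorsF ε).filter (· ≤ x)).max' hne := dif_pos hne
  have hmem := Finset.max'_mem _ hne
  rw [Finset.mem_filter] at hmem
  rw [heq]
  refine ⟨hmem.1, hmem.2, fun c hc hcx => ?_⟩
  exact Finset.le_max' ((anchorsF ε).filter (· ≤ x)) c (Finset.mem_filter.mpr ⟨hc, hcx⟩)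

lemma no_anchor_between {ε : Setoid (Fin n)} (hpl : IsPlanarEq ε) {m m' w : Fin n}
    (hun : Unnested ε m') (hmin : minCl ε m' = m') (hrw : ε.r m w)
    (h1 : m < m') (h2 : m' ≤ w) : False := by
  by_cases hr : ε.r m m'
  · have : m' ≤ m := by
      conv_lhs => rw [← hmin]
      exact minCl_le (ε.iseqv.symm hr)
    exact absurd h1 (not_lt.mpr this)
  · rcases hpl m m' hr with hsep | hnest | hnest'
    · rcases hsep with h | h
      · exact absurd (h w hrw m' (ε.iseqv.refl m')) (not_lt.mpr h2)
      · exact absurd (h m (ε.iseqv.refl m) m' (ε.iseqv.refl m')) (not_lt.mpr h1.le)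
    · obtain ⟨b1, hb1, b2, hb2, hlt, hcons, hall⟩ := hnest
      exact hcons m' (ε.iseqv.refl m')
        ⟨lt_trans (hall m (ε.iseqv.refl m)).1 h1, lt_of_le_of_lt h2 (hall w hrw).2⟩
    · exact hun m hnest'

lemma succ_anchor {ε : Setoid (Fin n)} (hpl : IsPlanarEq ε) {m t : Fin n}
    (hun : Unnested ε m) (ht : (t : ℕ) = (maxCl ε m : ℕ) + 1) :
    Unnested ε t ∧ minCl ε t = t := by
  set M := maxCl ε m with hM
  have hMt : M < t := by rw [Fin.lt_def]; omega
  have hmt : ¬ ε.r m t := fun h => absurd hMt (not_lt.mpr (le_maxCl h))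
  constructor
  · intro y' hnb
    obtain ⟨d1, hd1, d2, hd2, hdlt, hcons, hall⟩ := hnb
    have h1 : d1 < t := (hall t (ε.iseqv.refl t)).1
    have h2 : t < d2 := (hall t (ε.iseqv.refl t)).2
    by_cases hmy : ε.r m y'
    · have : d2 ≤ M := le_maxCl (ε.iseqv.trans hmy hd2)
      exact absurd (lt_trans hMt h2) (not_lt.mpr this)
    · rcases hpl m y' hmy with hsep | hn | hn'
      · rcases hsep with h | h
        · have hMd1 := h M (maxCl_rel ε m) d1 hd1
          rw [Fin.lt_def] at hMd1 h1; omega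
        · have hd2m := h m (ε.iseqv.refl m) d2 hd2
          exact absurd (lt_trans (lt_of_le_of_lt (self_le_maxCl ε m) hMt) h2)
            (not_lt.mpr hd2m.le)
      · exact hun y' hn
      · obtain ⟨b1, hb1, b2, hb2, hblt, hbcons, hball⟩ := hn'
        have hx : d2 < b2 := (hball d2 hd2).2
        have hy : b2 ≤ M := le_maxCl hb2
        rw [Fin.lt_def] at hx h2 hMt; rw [Fin.le_def] at hy; omega
  · by_contra hne
    have hlt : minCl ε t < t := lt_of_le_of_ne (minCl_le_self ε t) hne
    have hct : ε.r t (minCl ε t) := minCl_rel ε t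
    rcases hpl m t hmt with hsep | hn | hn'
    · rcases hsep with h | h
      · have hMc := h M (maxCl_rel ε m) (minCl ε t) hct
        rw [Fin.lt_def] at hMc hlt; omega
      · have := h m (ε.iseqv.refl m) t (ε.iseqv.refl t)
        exact absurd (lt_of_le_of_lt (self_le_maxCl ε m) hMt) (not_lt.mpr this.le)
    · exact hun t hn
    · obtain ⟨b1, hb1, b2, hb2, hblt, hbcons, hball⟩ := hn'
      have hx : t < b2 := (hball t (ε.iseqv.refl t)).2
      have hy : b2 ≤ M := le_maxCl hb2
      rw [Fin.lt_def] at hx hMt; rw [Fin.le_def] at hy; omega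

lemma ncMix {a : Ptn n} (hpl : Planar a) {x y b1 b2 : Fin n}
    (hxy : a.r (Sum.inl x) (Sum.inr y)) (h1 : b1 < y) (h2 : y < b2)
    (hb : a.r (Sum.inr b1) (Sum.inr b2)) : a.r (Sum.inl x) (Sum.inr b2) := by
  have hx := x.isLt; have hb1 := b1.isLt; have hb2 := b2.isLt; have hy := y.isLt
  rw [Fin.lt_def] at h1 h2
  exact hpl (Sum.inl x) (Sum.inr b2) (Sum.inr y) (Sum.inr b1)
    (by simp only [ordV, Sum.elim_inl, Sum.elim_inr]; omega)
    (by simp only [ordV, Sum.elim_inr]; omega)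
    (by simp only [ordV, Sum.elim_inr]; omega)
    hxy (a.iseqv.symm hb)

lemma ncLow {a : Ptn n} (hpl : Planar a) {x1 y1 x2 y2 : Fin n}
    (h1 : x1 < y1) (h2 : y1 < x2) (h3 : x2 < y2)
    (hX : a.r (Sum.inr x1) (Sum.inr x2)) (hY : a.r (Sum.inr y1) (Sum.inr y2)) :
    a.r (Sum.inr x2) (Sum.inr y2) := by
  have i1 := x1.isLt; have i2 := y1.isLt; have i3 := x2.isLt; have i4 := y2.isLt
  rw [Fin.lt_def] at h1 h2 h3
  have := hpl (Sum.inr y2) (Sum.inr x2) (Sum.inr y1) (Sum.inr x1)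
    (by simp only [ordV, Sum.elim_inr]; omega)
    (by simp only [ordV, Sum.elim_inr]; omega)
    (by simp only [ordV, Sum.elim_inr]; omega)
    (a.iseqv.symm hY) (a.iseqv.symm hX)
  exact a.iseqv.symm this

lemma nest_of_nc {ε : Setoid (Fin n)}
    (hnc : ∀ x1 y1 x2 y2 : Fin n, x1 < y1 → y1 < x2 → x2 < y2 →
      ε.r x1 x2 → ε.r y1 y2 → ε.r x2 y2)
    {x y : Fin n} (hne : ¬ ε.r x y) (h1 : minCl ε x < minCl ε y)
    (h2 : minCl ε y ≤ maxCl ε x) : NestedBy (clsS ε y) (clsS ε x) := by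
  set mX := minCl ε x with hmX
  set MX := maxCl ε x with hMX
  set mY := minCl ε y with hmY
  set MY := maxCl ε y with hMY
  have hrxMX : ε.r mX MX := ε.iseqv.trans (ε.iseqv.symm (minCl_rel ε x)) (maxCl_rel ε x)
  have hryMY : ε.r mY MY := ε.iseqv.trans (ε.iseqv.symm (minCl_rel ε y)) (maxCl_rel ε y)
  have hmm : mY < MX := by
    rcases lt_or_eq_of_le h2 with h | h
    · exact h
    · exfalso
      apply hne
      have hxmY : ε.r x mY := by rw [h]; exact maxCl_rel ε x
      exact ε.iseqv.trans hxmY (ε.iseqv.symm (minCl_rel ε y))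
  have hYlt : ∀ b, ε.r y b → mX < b ∧ b < MX := by
    intro b hb
    refine ⟨lt_of_lt_of_le h1 (minCl_le hb), ?_⟩
    have hbne : b ≠ MX := fun he =>
      hne (ε.iseqv.symm (ε.iseqv.trans hb (he ▸ (ε.iseqv.symm (maxCl_rel ε x)))))
    rcases lt_or_ge b MX with h | h
    · exact h
    exfalso
    have hMXb : MX < b := lt_of_le_of_ne h (Ne.symm hbne)
    have := hnc mX mY MX b h1 hmm hMXb hrxMX (ε.iseqv.trans (ε.iseqv.symm (minCl_rel ε y)) hb)
    exact hne (ε.iseqv.trans (ε.iseqv.trans (maxCl_rel ε x) this) (ε.iseqv.symm hb))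
  have hMYb := hYlt MY (maxCl_rel ε y)
  have hXgap : ∀ c, ε.r x c → ¬ (mY < c ∧ c < MY) := by
    rintro c hc ⟨g1, g2⟩
    have := hnc mY c MY MX g1 g2 hMYb.2 hryMY
      (ε.iseqv.trans (ε.iseqv.symm hc) (maxCl_rel ε x))
    exact hne (ε.iseqv.trans (maxCl_rel ε x) (ε.iseqv.symm (ε.iseqv.trans (maxCl_rel ε y) this)))
  -- b1 : largest element of X below mY;  b2 : smallest element of X above MY
  have hS1ne : (Finset.univ.filter fun b => ε.r x b ∧ b < mY).Nonempty :=
    ⟨mX, Finset.mem_filter.mpr ⟨Finset.mem_univ _, minCl_rel ε x, h1⟩⟩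
  have hS2ne : (Finset.univ.filter fun b => ε.r x b ∧ MY < b).Nonempty :=
    ⟨MX, Finset.mem_filter.mpr ⟨Finset.mem_univ _, maxCl_rel ε x, hMYb.2⟩⟩
  set b1 := (Finset.univ.filter fun b => ε.r x b ∧ b < mY).max' hS1ne with hb1def
  set b2 := (Finset.univ.filter fun b => ε.r x b ∧ MY < b).min' hS2ne with hb2def
  have hb1 := Finset.mem_filter.mp (Finset.max'_mem _ hS1ne)
  have hb2 := Finset.mem_filter.mp (Finset.min'_mem _ hS2ne)
  have hmYMY : mY ≤ MY := minCl_le (maxCl_rel ε y)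
  refine ⟨b1, hb1.2.1, b2, hb2.2.1, ?_, ?_, ?_⟩
  · exact lt_of_lt_of_le hb1.2.2 (le_trans hmYMY hb2.2.2.le)
  · intro b hb hbb
    have hbx : ε.r x b := hb
    rcases lt_trichotomy b mY with h | h | h
    · have : b ≤ b1 := Finset.le_max' _ _ (Finset.mem_filter.mpr ⟨Finset.mem_univ _, hbx, h⟩)
      exact absurd hbb.1 (not_lt.mpr this)
    · exact hne (ε.iseqv.trans hbx (h ▸ (ε.iseqv.symm (minCl_rel ε y))))
    · rcases lt_trichotomy b MY with h' | h' | h'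
      · exact hXgap b hbx ⟨h, h'⟩
      · exact hne (ε.iseqv.trans hbx (h' ▸ (ε.iseqv.symm (maxCl_rel ε y))))
      · have : b2 ≤ b := Finset.min'_le _ _ (Finset.mem_filter.mpr ⟨Finset.mem_univ _, hbx, h'⟩)
        exact absurd hbb.2 (not_lt.mpr this)
  · intro c hc
    have hcy : ε.r y c := hc
    exact ⟨lt_of_lt_of_le hb1.2.2 (minCl_le hcy), lt_of_le_of_lt (le_maxCl hcy) hb2.2.2⟩

lemma planar_of_nc {ε : Setoid (Fin n)}
    (hnc : ∀ x1 y1 x2 y2 : Fin n, x1 < y1 → y1 < x2 → x2 < y2 →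
      ε.r x1 x2 → ε.r y1 y2 → ε.r x2 y2) : IsPlanarEq ε := by
  intro x y hne
  rcases lt_or_ge (maxCl ε x) (minCl ε y) with h1 | h1
  · exact Or.inl (Or.inl fun a ha b hb =>
      lt_of_le_of_lt (le_maxCl ha) (lt_of_lt_of_le h1 (minCl_le hb)))
  rcases lt_or_ge (maxCl ε y) (minCl ε x) with h2 | h2
  · exact Or.inl (Or.inr fun a ha b hb =>
      lt_of_le_of_lt (le_maxCl hb) (lt_of_lt_of_le h2 (minCl_le ha)))
  rcases lt_trichotomy (minCl ε x) (minCl ε y) with h | h | h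
  · exact Or.inr (Or.inr (nest_of_nc hnc hne h h1))
  · exact absurd (ε.iseqv.trans (minCl_rel ε x) (h ▸ (ε.iseqv.symm (minCl_rel ε y)))) hne
  · exact Or.inr (Or.inl (nest_of_nc hnc (fun hh => hne (ε.iseqv.symm hh)) h h2))

lemma goodTrans_dEta [NeZero n] {ε : Setoid (Fin n)} (hpl : IsPlanarEq ε) :
    GoodTrans (dEta ε) := by
  intro x y hxy
  have hxy' : anchorBelow ε x = minCl ε y := hxy
  obtain ⟨hmem, hmlex, hmax⟩ := anchorBelow_spec ε x
  obtain ⟨hunm, hminm⟩ := mem_anchorsF.mp hmem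
  set m := anchorBelow ε x with hmdef
  set M := maxCl ε m with hMdef
  have hmM : ε.r m M := maxCl_rel ε m
  have key1 : ∀ w, m ≤ w → ε.r m w → anchorBelow ε w = m := by
    intro w hmw hrw
    obtain ⟨hmem', hle', hmax'⟩ := anchorBelow_spec ε w
    refine le_antisymm ?_ (hmax' m hmem hmw)
    by_contra hgt
    obtain ⟨hun', hmin'⟩ := mem_anchorsF.mp hmem'
    exact no_anchor_between hpl hun' hmin' hrw (not_le.mp hgt) hle'
  have key2 : ∀ z, anchorBelow ε z = m → z ≤ M := by
    intro z hz
    by_contra hgt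
    have hMz : M < z := not_le.mp hgt
    have hzlt := z.isLt
    have hMlt : (M : ℕ) < (z : ℕ) := Fin.lt_def.mp hMz
    set t : Fin n := ⟨(M : ℕ) + 1, by omega⟩ with htdef
    obtain ⟨hunt, hmint⟩ := succ_anchor hpl hunm (t := t) rfl
    have htz : t ≤ z := by rw [Fin.le_def]; simp [htdef]; omega
    have := (anchorBelow_spec ε z).2.2 t (mem_anchorsF.mpr ⟨hunt, hmint⟩) htz
    rw [hz] at this
    have hmM' : m ≤ M := self_le_maxCl ε m
    rw [Fin.le_def] at this hmM'
    simp [htdef] at this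
    omega
  refine ⟨?_, ?_, ?_, ?_⟩
  · intro z hz
    have hz' : anchorBelow ε x = anchorBelow ε z := hz
    refine ⟨m, ?_, ?_⟩
    · show dMap ε (Sum.inl x) = dMap ε (Sum.inr m)
      show anchorBelow ε x = minCl ε m
      rw [hminm]
    · have hh := (anchorBelow_spec ε z).2.1
      rw [← hz'] at hh
      exact hh
  · intro w hw
    have hw' : anchorBelow ε x = minCl ε w := hw
    have hrw : ε.r m w := by
      rw [hmdef, hw']
      exact ε.iseqv.symm (minCl_rel ε w)
    refine ⟨w, ?_, le_refl w⟩
    show anchorBelow ε x = anchorBelow ε w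
    rw [key1 w (by rw [hmdef, hw']; exact minCl_le_self ε w) hrw]
  · intro z hz
    have hz' : anchorBelow ε x = anchorBelow ε z := hz
    refine ⟨M, ?_, key2 z hz'.symm⟩
    show anchorBelow ε x = minCl ε M
    rw [← minCl_congr hmM, hminm]
  · intro w hw
    have hw' : anchorBelow ε x = minCl ε w := hw
    have hrw : ε.r m w := by
      rw [hmdef, hw']
      exact ε.iseqv.symm (minCl_rel ε w)
    refine ⟨M, ?_, le_maxCl hrw⟩
    show anchorBelow ε x = anchorBelow ε M
    rw [key1 M (self_le_maxCl ε m) hmM]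

lemma mixed_forward [NeZero n] {a : Ptn n} (hp : Planar a)
    (hple : IsPlanarEq (cokerP a)) (hg : GoodTrans a) {x y : Fin n}
    (hxy : a.r (Sum.inl x) (Sum.inr y)) :
    anchorBelow (cokerP a) x = minCl (cokerP a) y := by
  set ε := cokerP a with hε
  have hUn : Unnested ε y := by
    rintro y' ⟨b1, hb1, b2, hb2, hlt, hcons, hall⟩
    have h1 : b1 < y := (hall y (ε.iseqv.refl y)).1
    have h2 : y < b2 := (hall y (ε.iseqv.refl y)).2
    have hb : a.r (Sum.inr b1) (Sum.inr b2) := ε.iseqv.trans (ε.iseqv.symm hb1) hb2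
    have hxb2 : a.r (Sum.inl x) (Sum.inr b2) := ncMix hp hxy h1 h2 hb
    have hyb2 : ε.r y b2 := a.iseqv.trans (a.iseqv.symm hxy) hxb2
    exact absurd (hall b2 hyb2).2 (lt_irrefl b2)
  set m := minCl ε y with hm
  have hym : ε.r y m := minCl_rel ε y
  have hunm : Unnested ε m := by
    intro y' hnb
    rw [clsS_congr (ε.iseqv.symm hym)] at hnb
    exact hUn y' hnb
  have hminm : minCl ε m = m := (minCl_congr hym).symm
  obtain ⟨hg1, hg2, hg3, hg4⟩ := hg x y hxy
  have hmlex : m ≤ x := by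
    obtain ⟨w, hw, hwx⟩ := hg1 x (a.iseqv.refl (Sum.inl x))
    have : ε.r y w := a.iseqv.trans (a.iseqv.symm hxy) hw
    exact le_trans (minCl_le this) hwx
  obtain ⟨hmem', hle', hmax'⟩ := anchorBelow_spec ε x
  refine le_antisymm ?_ (hmax' m (mem_anchorsF.mpr ⟨hunm, hminm⟩) hmlex)
  by_contra hgt
  have hlt : m < anchorBelow ε x := not_le.mp hgt
  obtain ⟨hun', hmin'⟩ := mem_anchorsF.mp hmem'
  obtain ⟨w, hw, hxw⟩ := hg3 x (a.iseqv.refl (Sum.inl x))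
  have hyw : ε.r y w := a.iseqv.trans (a.iseqv.symm hxy) hw
  have hmw : ε.r m w := ε.iseqv.trans (ε.iseqv.symm hym) hyw
  exact no_anchor_between hple hun' hmin' hmw hlt (le_trans hle' hxw)

lemma dEta_of_good [NeZero n] {a : Ptn n} (hfd : FullDom a) (hp : Planar a)
    (hple : IsPlanarEq (cokerP a)) (hg : GoodTrans a) : a = dEta (cokerP a) := by
  set ε := cokerP a with hε
  apply Setoid.ext
  have mf := fun {x y : Fin n} (h : a.r (Sum.inl x) (Sum.inr y)) =>
    mixed_forward hp hple hg h
  rintro (x | x) (y | y)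
  · constructor
    · intro h
      obtain ⟨y0, hy0⟩ := hfd x
      have hy0' : a.r (Sum.inl y) (Sum.inr y0) := a.iseqv.trans (a.iseqv.symm h) hy0
      show anchorBelow ε x = anchorBelow ε y
      rw [mf hy0, mf hy0']
    · intro h
      have h' : anchorBelow ε x = anchorBelow ε y := h
      obtain ⟨y0, hy0⟩ := hfd x
      obtain ⟨y1, hy1⟩ := hfd y
      have : minCl ε y0 = minCl ε y1 := by rw [← mf hy0, ← mf hy1, h']
      have hrel : a.r (Sum.inr y0) (Sum.inr y1) := rel_iff_minCl.mpr this
      exact a.iseqv.trans hy0 (a.iseqv.trans hrel (a.iseqv.symm hy1))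
  · constructor
    · intro h
      exact mf h
    · intro h
      have h' : anchorBelow ε x = minCl ε y := h
      obtain ⟨y0, hy0⟩ := hfd x
      have : minCl ε y0 = minCl ε y := by rw [← mf hy0, h']
      exact a.iseqv.trans hy0 (rel_iff_minCl.mpr this)
  · constructor
    · intro h
      show minCl ε x = anchorBelow ε y
      exact (mf (a.iseqv.symm h)).symm
    · intro h
      have h' : minCl ε x = anchorBelow ε y := h
      obtain ⟨y0, hy0⟩ := hfd y
      have : minCl ε y0 = minCl ε x := by rw [← mf hy0, ← h']
      exact a.iseqv.symm (a.iseqv.trans hy0 (rel_iff_minCl.mpr this))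
  · constructor
    · intro h
      show minCl ε x = minCl ε y
      exact rel_iff_minCl.mp h
    · intro h
      exact rel_iff_minCl.mpr h

lemma cokerP_dEta [NeZero n] (ε : Setoid (Fin n)) : cokerP (dEta ε) = ε := by
  apply Setoid.ext
  intro x y
  show minCl ε x = minCl ε y ↔ ε.r x y
  exact rel_iff_minCl.symm

end Aux

/-- Lemma `lem:minmax`.  For `a ∈ PP_n^fd`: `a ∈ D_n` iff every
transversal `A ∪ B'` of `a` has `min A = min B` and `max A = max B`; in that case
`coker a` is a planar equivalence and `a = d_{coker a}`. -/
theorem stmt15 (n : ℕ) (hn : 2 ≤ n) [NeZero n] (a : Ptn n) (ha : a ∈ PPfd n) :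
    (a ∈ DSet n ↔ GoodTrans a) ∧
    (a ∈ DSet n → IsPlanarEq (cokerP a) ∧ a = dEta (cokerP a)) := by
  obtain ⟨hfd, hp⟩ := ha
  have hnc : ∀ x1 y1 x2 y2 : Fin n, x1 < y1 → y1 < x2 → x2 < y2 →
      (cokerP a).r x1 x2 → (cokerP a).r y1 y2 → (cokerP a).r x2 y2 :=
    fun x1 y1 x2 y2 h1 h2 h3 hX hY => ncLow hp h1 h2 h3 hX hY
  have hple := planar_of_nc hnc
  constructor
  · constructor
    · rintro ⟨ε, hpe, rfl⟩
      exact goodTrans_dEta hpe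
    · intro hg
      exact ⟨cokerP a, hple, dEta_of_good hfd hp hple hg⟩
  · rintro ⟨ε, hpe, rfl⟩
    rw [cokerP_dEta]
    exact ⟨hpe, rfl⟩

end PaperFDP
end
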